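/- arXiv:2405.10722 — 5 statements merged into one kernel-verified Lean document; each statement's English description precedes it below -/
import Mathlib

section
/- For every natural number n ≥ 1, the eigenvalue of the combined Neumann (Burton–Miller) operator on the unit sphere with coupling factor η = i/k, namely λ_n(N)(k) = i·k²·h_n′(k)·(j_n(k) + i·j_n′(k)), satisfies lim_{k→0⁺} k·λ_n(N)(k) = −i·n(n+1)/(2n+1); in particular |λ_n(N)(k)| → ∞ as k → 0⁺, so these eigenvalues diverge in the low-frequency limit. -/
open Real Complex Filter Topology
open intervalIntegral ContDiff

/-- The Rayleigh operator `f ↦ (x⁻¹ d/dx) f`. -/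
noncomputable def sphStep (f : ℝ → ℝ) : ℝ → ℝ := fun x => deriv f x / x

/-- Spherical Bessel function of the first kind:
`j_n(x) = (−x)^n (x⁻¹ d/dx)^n (sin x / x)`. -/
noncomputable def sphj (n : ℕ) (x : ℝ) : ℝ :=
  (-x) ^ n * (sphStep^[n] (fun t => Real.sin t / t)) x

/-- Spherical Bessel function of the second kind:
`y_n(x) = −(−x)^n (x⁻¹ d/dx)^n (cos x / x)`. -/
noncomputable def sphy (n : ℕ) (x : ℝ) : ℝ :=
  -((-x) ^ n * (sphStep^[n] (fun t => Real.cos t / t)) x)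

/-- Spherical Hankel function of the first kind: `h_n = j_n + i y_n`. -/
noncomputable def sphh (n : ℕ) (x : ℝ) : ℂ :=
  (sphj n x : ℂ) + Complex.I * (sphy n x : ℂ)

/-- Derivative `j_n′`. -/
noncomputable def sphj' (n : ℕ) (x : ℝ) : ℝ := deriv (sphj n) x

/-- Derivative `y_n′`. -/
noncomputable def sphy' (n : ℕ) (x : ℝ) : ℝ := deriv (sphy n) x

/-- Derivative `h_n′`. -/
noncomputable def sphh' (n : ℕ) (x : ℝ) : ℂ := deriv (sphh n) x

noncomputable def df : ℕ → ℝ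
  | 0 => 1
  | n+1 => (2*n+1) * df n

lemma df_pos (n : ℕ) : 0 < df n := by
  induction n with
  | zero => norm_num [df]
  | succ n ih => have : (0:ℝ) < 2*n+1 := by positivity
                 simpa [df] using mul_pos this ih

noncomputable def Fint (n : ℕ) (x : ℝ) : ℝ := ∫ t in (0:ℝ)..1, (1 - t^2)^n * Real.cos (x*t)

lemma Fint_cont_integrand (n : ℕ) (x : ℝ) :
    Continuous fun t : ℝ => (1 - t^2)^n * Real.cos (x*t) := by fun_prop

lemma Fint_parts (n : ℕ) (x : ℝ) :
    ∫ t in (0:ℝ)..1, (1 - t^2)^n * (-Real.sin (x*t) * t) = -(x/(2*n+2)) * Fint (n+1) x := by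
  have hu : ∀ t ∈ Set.uIcc (0:ℝ) 1, HasDerivAt (fun t => Real.sin (x*t))
      (Real.cos (x*t) * x) t := by
    intro t _
    exact ((Real.hasDerivAt_sin (x*t)).comp t ((hasDerivAt_id t).const_mul x)).congr_deriv (by simp)
  have hv : ∀ t ∈ Set.uIcc (0:ℝ) 1, HasDerivAt (fun t : ℝ => -(1-t^2)^(n+1) / (2*(n:ℝ)+2))
      ((1-t^2)^n * t) t := by
    intro t _
    have h1 : HasDerivAt (fun t : ℝ => 1 - t^2) (-(2*t^1)) t :=
      ((hasDerivAt_pow 2 t).const_sub 1)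
    have h2' := ((h1.pow (n+1)).neg).div_const (2*(n:ℝ)+2)
    refine h2'.congr_deriv ?_
    have hne : 2*(n:ℝ)+2 ≠ 0 := by positivity
    push_cast
    field_simp
  have key := intervalIntegral.integral_mul_deriv_eq_deriv_mul
    (u := fun t => Real.sin (x*t)) (v := fun t : ℝ => -(1-t^2)^(n+1) / (2*(n:ℝ)+2))
    (u' := fun t => Real.cos (x*t) * x) (v' := fun t => (1-t^2)^n * t)
    hu hv (Continuous.intervalIntegrable (by fun_prop) _ _)
    (Continuous.intervalIntegrable (by fun_prop) _ _)
  have lhs_eq : ∫ t in (0:ℝ)..1, (1 - t^2)^n * (-Real.sin (x*t) * t)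
      = -∫ t in (0:ℝ)..1, Real.sin (x*t) * ((1-t^2)^n * t) := by
    rw [← intervalIntegral.integral_neg]
    congr 1; funext t; ring
  rw [lhs_eq, key]
  have h3 : ∫ t in (0:ℝ)..1, Real.cos (x*t) * x * (-(1-t^2)^(n+1) / (2*(n:ℝ)+2))
      = -(x/(2*(n:ℝ)+2)) * ∫ t in (0:ℝ)..1, (1-t^2)^(n+1) * Real.cos (x*t) := by
    rw [← intervalIntegral.integral_const_mul]
    congr 1; funext t
    ring
  rw [h3]
  norm_num [Fint]

lemma Fint_hasDerivAt (n : ℕ) (x : ℝ) :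
    HasDerivAt (Fint n) (-(x / (2*n+2)) * Fint (n+1) x) x := by
  have key := intervalIntegral.hasDerivAt_integral_of_dominated_loc_of_deriv_le
    (F := fun x t => (1 - t^2)^n * Real.cos (x*t))
    (F' := fun x t => (1 - t^2)^n * (-Real.sin (x*t) * t))
    (x₀ := x) (a := 0) (b := 1) (bound := fun _ => 1) (s := Metric.ball x 1) (μ := MeasureTheory.volume)
    (Metric.ball_mem_nhds x one_pos)
    (Filter.Eventually.of_forall fun y => (Fint_cont_integrand n y).aestronglyMeasurable)
    ((Fint_cont_integrand n x).intervalIntegrable 0 1)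
    ((Continuous.aestronglyMeasurable (by fun_prop)))
    ?_ (intervalIntegrable_const) ?_
  · have h := key.2
    rw [Fint_parts n x] at h
    exact h
  · refine Filter.Eventually.of_forall fun t ht y _ => ?_
    rw [Set.uIoc_of_le (by norm_num : (0:ℝ) ≤ 1)] at ht
    have ht0 : 0 < t := ht.1
    have ht1 : t ≤ 1 := ht.2
    have habs : |1 - t^2| ≤ 1 := by rw [abs_le]; constructor <;> nlinarith
    have hsin : |Real.sin (y*t)| ≤ 1 := Real.abs_sin_le_one (y*t)
    have htabs : |t| ≤ 1 := by rw [abs_le]; constructor <;> nlinarith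
    calc ‖(1 - t^2)^n * (-Real.sin (y*t) * t)‖
        = |1-t^2|^n * (|Real.sin (y*t)| * |t|) := by
          rw [Real.norm_eq_abs, abs_mul, abs_mul, abs_neg, _root_.abs_pow]
      _ ≤ 1^n * (1*1) := by
          gcongr
      _ = 1 := by norm_num
  · refine Filter.Eventually.of_forall fun t _ y _ => ?_
    have h := (Real.hasDerivAt_cos (y*t)).comp y (hasDerivAt_mul_const t)
    simpa using h.const_mul ((1 - t^2)^n)

lemma Fint_zero_zero : Fint 0 0 = 1 := by
  norm_num [Fint]

lemma Fint_zero (m : ℕ) : Fint m 0 = ∫ t in (0:ℝ)..1, (1-t^2)^m := by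
  unfold Fint
  norm_num

lemma Fint_rec (n : ℕ) : (2*(n:ℝ)+3) * Fint (n+1) 0 = (2*(n:ℝ)+2) * Fint n 0 := by
  have hg : ∀ t ∈ Set.uIcc (0:ℝ) 1, HasDerivAt (fun t : ℝ => t * (1-t^2)^(n+1))
      ((2*(n:ℝ)+3) * (1-t^2)^(n+1) - (2*(n:ℝ)+2) * (1-t^2)^n) t := by
    intro t _
    have h1 : HasDerivAt (fun t : ℝ => 1 - t^2) (-(2*t^1)) t :=
      ((hasDerivAt_pow 2 t).const_sub 1)
    have h2 := (hasDerivAt_id t).mul (h1.pow (n+1))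
    refine h2.congr_deriv ?_
    simp only [id_eq, Nat.add_sub_cancel, Pi.pow_apply]
    rw [pow_succ]
    push_cast
    ring
  have key := intervalIntegral.integral_eq_sub_of_hasDerivAt hg
    (Continuous.intervalIntegrable (by fun_prop) _ _)
  norm_num at key
  have split : ∫ t in (0:ℝ)..1, ((2*(n:ℝ)+3) * (1-t^2)^(n+1) - (2*(n:ℝ)+2) * (1-t^2)^n)
      = (2*(n:ℝ)+3) * Fint (n+1) 0 - (2*(n:ℝ)+2) * Fint n 0 := by
    rw [intervalIntegral.integral_sub, intervalIntegral.integral_const_mul,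
      intervalIntegral.integral_const_mul, Fint_zero, Fint_zero]
    · exact Continuous.intervalIntegrable (by fun_prop) _ _
    · exact Continuous.intervalIntegrable (by fun_prop) _ _
  rw [key] at split
  linarith

lemma Fint_fact (n : ℕ) : Fint n 0 * ((2*(n:ℝ)+1) * df n) = 2^n * (n.factorial : ℝ) := by
  induction n with
  | zero => norm_num [df, Fint_zero_zero]
  | succ n ih =>
    calc Fint (n+1) 0 * ((2*(↑(n+1):ℝ)+1) * df (n+1))
        = ((2*(n:ℝ)+3) * Fint (n+1) 0) * ((2*(n:ℝ)+1) * df n) := by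
          simp only [df]; push_cast; ring
      _ = ((2*(n:ℝ)+2) * Fint n 0) * ((2*(n:ℝ)+1) * df n) := by rw [Fint_rec]
      _ = (2*(n:ℝ)+2) * (Fint n 0 * ((2*(n:ℝ)+1) * df n)) := by ring
      _ = (2*(n:ℝ)+2) * (2^n * (n.factorial : ℝ)) := by rw [ih]
      _ = 2^(n+1) * ((n+1).factorial : ℝ) := by rw [Nat.factorial_succ]; push_cast; ring

lemma eventually_ne (x : ℝ) (hx : x ≠ 0) : ∀ᶠ y in 𝓝 x, y ≠ 0 :=
  isOpen_compl_singleton.mem_nhds (by simpa using hx)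

lemma hasDerivAt_congr_ne {f g : ℝ → ℝ} {d x : ℝ} (hx : x ≠ 0)
    (h : ∀ y, y ≠ 0 → f y = g y) (hg : HasDerivAt g d x) : HasDerivAt f d x := by
  refine hg.congr_of_eventuallyEq ?_
  filter_upwards [eventually_ne x hx] with y hy
  exact h y hy

lemma step_sin (n : ℕ) : ∀ x : ℝ, x ≠ 0 →
    (sphStep^[n] (fun t => Real.sin t / t)) x = (-1)^n / (2^n * (n.factorial : ℝ)) * Fint n x := by
  induction n with
  | zero =>
    intro x hx
    have h : ∀ t ∈ Set.uIcc (0:ℝ) 1, HasDerivAt (fun t => Real.sin (x*t) / x)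
        (Real.cos (x*t)) t := by
      intro t _
      have h1 : HasDerivAt (fun t => Real.sin (x*t)) (Real.cos (x*t) * x) t := by
        exact ((Real.hasDerivAt_sin (x*t)).comp t ((hasDerivAt_id t).const_mul x)).congr_deriv (by simp)
      have := h1.div_const x
      rwa [mul_div_cancel_right₀ _ hx] at this
    have key := intervalIntegral.integral_eq_sub_of_hasDerivAt h
      (Continuous.intervalIntegrable (by fun_prop) _ _)
    simp only [Function.iterate_zero_apply]
    norm_num [Fint]
    rw [key]
    norm_num
  | succ n ih =>
    intro x hx
    rw [Function.iterate_succ_apply']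
    have hd : HasDerivAt (sphStep^[n] (fun t => Real.sin t / t))
        ((-1)^n / (2^n * (n.factorial : ℝ)) * (-(x / (2*n+2)) * Fint (n+1) x)) x :=
      hasDerivAt_congr_ne hx ih ((Fint_hasDerivAt n x).const_mul _)
    show deriv _ x / x = _
    rw [hd.deriv]
    rw [Nat.factorial_succ, pow_succ, pow_succ]
    have hfn : ((n.factorial : ℝ)) ≠ 0 := Nat.cast_ne_zero.mpr n.factorial_ne_zero
    have h2 : (2:ℝ)^n ≠ 0 := by positivity
    have hn2 : (2*(n:ℝ)+2) ≠ 0 := by positivity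
    push_cast
    field_simp

lemma step_cos (n : ℕ) : ∃ S : ℝ → ℝ, ContDiff ℝ ∞ S ∧ S 0 = 0 ∧
    ∀ x : ℝ, x ≠ 0 → (sphStep^[n] (fun t => Real.cos t / t)) x
      = (x⁻¹)^(2*n+1) * ((-1)^n * df n * Real.cos x + S x) := by
  induction n with
  | zero =>
    refine ⟨0, contDiff_const, rfl, fun x hx => ?_⟩
    simp [df]
    ring
  | succ n ih =>
    obtain ⟨S, hS, hS0, hrep⟩ := ih
    have hSd : Differentiable ℝ S := hS.differentiable (by norm_num)
    have hS' : ContDiff ℝ ∞ (deriv S) := (contDiff_infty_iff_deriv.mp hS).2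
    refine ⟨fun x => -(2*(n:ℝ)+1) * S x - (-1)^n * df n * (x * Real.sin x) + x * deriv S x,
      ?_, by simp [hS0], ?_⟩
    · have hsin : ContDiff ℝ ∞ Real.sin := Real.contDiff_sin
      fun_prop
    · intro x hx
      rw [Function.iterate_succ_apply']
      have hinner : HasDerivAt (fun y => (-1:ℝ)^n * df n * Real.cos y + S y)
          (-((-1)^n * df n) * Real.sin x + deriv S x) x := by
        have h1 := (Real.hasDerivAt_cos x).const_mul ((-1:ℝ)^n * df n)
        have h2 := (hSd x).hasDerivAt
        exact (h1.add h2).congr_deriv (by ring)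
      have hpow : HasDerivAt (fun y : ℝ => (y⁻¹)^(2*n+1))
          ((2*(n:ℝ)+1) * (x⁻¹)^(2*n) * (-(x^2)⁻¹)) x := by
        have := (hasDerivAt_inv hx).fun_pow (2*n+1)
        exact this.congr_deriv (by rw [Nat.add_sub_cancel]; push_cast; ring)
      have hG := hpow.mul hinner
      have hd : HasDerivAt (sphStep^[n] (fun t => Real.cos t / t))
          ((2*(n:ℝ)+1) * (x⁻¹)^(2*n) * (-(x^2)⁻¹) * ((-1:ℝ)^n * df n * Real.cos x + S x)
            + (x⁻¹)^(2*n+1) * (-((-1:ℝ)^n * df n) * Real.sin x + deriv S x)) x :=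
        hasDerivAt_congr_ne hx hrep hG
      show deriv _ x / x = _
      rw [hd.deriv]
      simp only [df]
      push_cast
      simp only [inv_pow]
      field_simp
      ring

lemma sphj_rep (n : ℕ) : ∀ x : ℝ, x ≠ 0 →
    sphj n x = x^n * ((2:ℝ)^n * (n.factorial:ℝ))⁻¹ * Fint n x := by
  intro x hx
  unfold sphj
  rw [step_sin n x hx, neg_pow, div_eq_mul_inv]
  have h1 : (-1:ℝ)^n * (-1:ℝ)^n = 1 := by
    rw [← pow_add]; exact Even.neg_one_pow ⟨n, rfl⟩
  linear_combination (x^n * (((2:ℝ)^n * (n.factorial:ℝ))⁻¹) * Fint n x) * h1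

lemma sphj_hasDerivAt (n : ℕ) (x : ℝ) (hx : x ≠ 0) :
    HasDerivAt (sphj n)
      (((n:ℝ) * x^(n-1)) * ((2:ℝ)^n * (n.factorial:ℝ))⁻¹ * Fint n x
        + x^n * ((2:ℝ)^n * (n.factorial:ℝ))⁻¹ * (-(x / (2*n+2)) * Fint (n+1) x)) x := by
  refine hasDerivAt_congr_ne hx (sphj_rep n) ?_
  exact ((hasDerivAt_pow n x).mul_const _).mul (Fint_hasDerivAt n x)

lemma sphj'_eq (n : ℕ) (x : ℝ) (hx : x ≠ 0) :
    sphj' n x = ((n:ℝ) * x^(n-1)) * ((2:ℝ)^n * (n.factorial:ℝ))⁻¹ * Fint n x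
        + x^n * ((2:ℝ)^n * (n.factorial:ℝ))⁻¹ * (-(x / (2*n+2)) * Fint (n+1) x) :=
  (sphj_hasDerivAt n x hx).deriv

lemma sphj_hasDerivAt' (n : ℕ) (x : ℝ) (hx : x ≠ 0) :
    HasDerivAt (sphj n) (sphj' n x) x := by
  rw [sphj'_eq n x hx]; exact sphj_hasDerivAt n x hx

lemma sphy_package (n : ℕ) : ∃ T : ℝ → ℝ, ContDiff ℝ ∞ T ∧ T 0 = 0 ∧
    (∀ x : ℝ, x ≠ 0 → sphy n x = -((x⁻¹)^(n+1) * (df n * Real.cos x + T x))) ∧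
    (∀ x : ℝ, x ≠ 0 → HasDerivAt (sphy n)
      (-((((n:ℝ)+1) * (x⁻¹)^n * (-(x^2)⁻¹)) * (df n * Real.cos x + T x)
        + (x⁻¹)^(n+1) * (df n * -Real.sin x + deriv T x))) x) := by
  obtain ⟨S, hS, hS0, hrep⟩ := step_cos n
  have hSd : Differentiable ℝ S := hS.differentiable (by norm_num)
  refine ⟨fun x => (-1:ℝ)^n * S x, contDiff_const.mul hS, by simp [hS0], ?_, ?_⟩
  · intro x hx
    unfold sphy
    rw [hrep x hx, neg_pow]
    have h1 : (-1:ℝ)^(n*2) = 1 := Even.neg_one_pow ⟨n, by ring⟩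
    simp only [inv_pow]
    field_simp
    ring_nf
    rw [h1]
    ring
  · intro x hx
    have hrep2 : ∀ y : ℝ, y ≠ 0 →
        sphy n y = -((y⁻¹)^(n+1) * (df n * Real.cos y + (-1:ℝ)^n * S y)) := by
      intro y hy
      unfold sphy
      rw [hrep y hy, neg_pow]
      have h1 : (-1:ℝ)^(n*2) = 1 := Even.neg_one_pow ⟨n, by ring⟩
      simp only [inv_pow]
      field_simp
      ring_nf
      rw [h1]
      ring
    have hT' : deriv (fun x => (-1:ℝ)^n * S x) x = (-1:ℝ)^n * deriv S x :=
      deriv_const_mul _ (hSd x)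
    rw [hT']
    refine hasDerivAt_congr_ne hx hrep2 ?_
    have hinner : HasDerivAt (fun y => df n * Real.cos y + (-1:ℝ)^n * S y)
        (df n * -Real.sin x + (-1:ℝ)^n * deriv S x) x :=
      ((Real.hasDerivAt_cos x).const_mul (df n)).add ((hSd x).hasDerivAt.const_mul ((-1:ℝ)^n))
    have hpow : HasDerivAt (fun y : ℝ => (y⁻¹)^(n+1)) (((n:ℝ)+1) * (x⁻¹)^n * (-(x^2)⁻¹)) x := by
      have := (hasDerivAt_inv hx).fun_pow (n+1)
      exact this.congr_deriv (by rw [Nat.add_sub_cancel]; push_cast; ring)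
    exact (hpow.mul hinner).neg

lemma sphy_hasDerivAt' (n : ℕ) (x : ℝ) (hx : x ≠ 0) :
    HasDerivAt (sphy n) (sphy' n x) x := by
  obtain ⟨T, _, _, _, hd⟩ := sphy_package n
  have h := hd x hx
  rw [show sphy' n x = _ from h.deriv]
  exact h

lemma tendsto_P (n : ℕ) :
    Tendsto (fun k : ℝ => (k⁻¹)^n * sphj n k) (𝓝[>](0:ℝ))
      (𝓝 (((2:ℝ)^n * (n.factorial:ℝ))⁻¹ * Fint n 0)) := by
  have hc : Tendsto (fun k : ℝ => ((2:ℝ)^n * (n.factorial:ℝ))⁻¹ * Fint n k) (𝓝[>](0:ℝ))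
      (𝓝 (((2:ℝ)^n * (n.factorial:ℝ))⁻¹ * Fint n 0)) :=
    ((continuousAt_const.mul (Fint_hasDerivAt n 0).continuousAt).tendsto).mono_left
      nhdsWithin_le_nhds
  refine hc.congr' ?_
  filter_upwards [eventually_mem_nhdsWithin] with k hk
  have hkne : (k:ℝ) ≠ 0 := ne_of_gt hk
  rw [sphj_rep n k hkne]
  simp only [inv_pow]
  field_simp

lemma tendsto_Q (m : ℕ) :
    Tendsto (fun k : ℝ => k * (k⁻¹)^(m+1) * sphj' (m+1) k) (𝓝[>](0:ℝ))
      (𝓝 (((2:ℝ)^(m+1) * ((m+1).factorial:ℝ))⁻¹ * (((m:ℝ)+1) * Fint (m+1) 0))) := by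
  set c : ℝ := ((2:ℝ)^(m+1) * ((m+1).factorial:ℝ))⁻¹ with hc_def
  have hcont : ContinuousAt (fun k : ℝ =>
      c * (((m:ℝ)+1) * Fint (m+1) k) - c * (k^2/(2*((m:ℝ)+1)+2)) * Fint (m+2) k) 0 := by
    have h1 : ContinuousAt (Fint (m+1)) 0 := (Fint_hasDerivAt (m+1) 0).continuousAt
    have h2 : ContinuousAt (Fint (m+2)) 0 := (Fint_hasDerivAt (m+2) 0).continuousAt
    fun_prop
  have hval : c * (((m:ℝ)+1) * Fint (m+1) 0) - c * ((0:ℝ)^2/(2*((m:ℝ)+1)+2)) * Fint (m+2) 0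
      = c * (((m:ℝ)+1) * Fint (m+1) 0) := by norm_num
  have hc2 := (hcont.tendsto).mono_left (nhdsWithin_le_nhds (s := Set.Ioi (0:ℝ)))
  rw [hval] at hc2
  refine hc2.congr' ?_
  filter_upwards [eventually_mem_nhdsWithin] with k hk
  have hkne : (k:ℝ) ≠ 0 := ne_of_gt hk
  rw [sphj'_eq (m+1) k hkne]
  simp only [Nat.add_sub_cancel, Nat.cast_add, Nat.cast_one]
  rw [← hc_def]
  have hden : 2*((m:ℝ)+1)+2 ≠ 0 := by positivity
  simp only [inv_pow]
  field_simp
  ring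

lemma tendsto_U (n : ℕ) :
    Tendsto (fun k : ℝ => k^(n+1) * sphy n k) (𝓝[>](0:ℝ)) (𝓝 (-df n)) := by
  obtain ⟨T, hT, hT0, hrep, _⟩ := sphy_package n
  have hcont : ContinuousAt (fun k : ℝ => -(df n * Real.cos k + T k)) 0 := by
    have h1 : Continuous T := hT.continuous
    fun_prop
  have hval : -(df n * Real.cos 0 + T 0) = -df n := by simp [hT0]
  have hc2 := (hcont.tendsto).mono_left (nhdsWithin_le_nhds (s := Set.Ioi (0:ℝ)))
  rw [hval] at hc2
  refine hc2.congr' ?_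
  filter_upwards [eventually_mem_nhdsWithin] with k hk
  have hkne : (k:ℝ) ≠ 0 := ne_of_gt hk
  rw [hrep k hkne]
  simp only [inv_pow]
  field_simp

lemma tendsto_V (n : ℕ) :
    Tendsto (fun k : ℝ => k^(n+2) * sphy' n k) (𝓝[>](0:ℝ)) (𝓝 (((n:ℝ)+1) * df n)) := by
  obtain ⟨T, hT, hT0, hrep, hder⟩ := sphy_package n
  have hT' : Continuous (deriv T) := ((contDiff_infty_iff_deriv.mp hT).2).continuous
  have hTc : Continuous T := hT.continuous
  have hcont : ContinuousAt (fun k : ℝ =>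
      ((n:ℝ)+1) * (df n * Real.cos k + T k) - k * (df n * -Real.sin k + deriv T k)) 0 := by
    fun_prop
  have hval : ((n:ℝ)+1) * (df n * Real.cos 0 + T 0) - 0 * (df n * -Real.sin 0 + deriv T 0)
      = ((n:ℝ)+1) * df n := by simp [hT0]
  have hc2 := (hcont.tendsto).mono_left (nhdsWithin_le_nhds (s := Set.Ioi (0:ℝ)))
  rw [hval] at hc2
  refine hc2.congr' ?_
  filter_upwards [eventually_mem_nhdsWithin] with k hk
  have hkne : (k:ℝ) ≠ 0 := ne_of_gt hk
  have hde : sphy' n k = -((((n:ℝ)+1) * (k⁻¹)^n * (-(k^2)⁻¹)) * (df n * Real.cos k + T k)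
      + (k⁻¹)^(n+1) * (df n * -Real.sin k + deriv T k)) := (hder k hkne).deriv
  rw [hde]
  simp only [inv_pow]
  field_simp
  ring

lemma sphh'_eq (n : ℕ) (x : ℝ) (hx : x ≠ 0) :
    sphh' n x = (sphj' n x : ℂ) + Complex.I * (sphy' n x : ℂ) := by
  have hj := (sphj_hasDerivAt' n x hx).ofReal_comp
  have hy := (sphy_hasDerivAt' n x hx).ofReal_comp
  have h : HasDerivAt (sphh n) ((sphj' n x : ℂ) + Complex.I * (sphy' n x : ℂ)) x := by
    have := hj.add (hy.const_mul Complex.I)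
    exact this
  exact h.deriv

/-- Burton–Miller Neumann eigenvalue with η = i/k,
λ_n(N)(k) = i·k²·h_n′(k)·(j_n(k) + i·j_n′(k)): k·λ_n(N)(k) → −i·n(n+1)/(2n+1) as k → 0⁺,
and |λ_n(N)(k)| → ∞ as k → 0⁺. -/
theorem neumann_BM_eigenvalue_diverges (n : ℕ) (hn : 1 ≤ n) :
    Filter.Tendsto
      (fun k : ℝ => (k : ℂ) *
        (Complex.I * (k : ℂ) ^ 2 * sphh' n k *
          ((sphj n k : ℂ) + Complex.I * (sphj' n k : ℂ))))
      (𝓝[>] (0 : ℝ)) (𝓝 (-Complex.I * ((n : ℂ) * ((n : ℂ) + 1)) / (2 * (n : ℂ) + 1))) ∧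
    Filter.Tendsto
      (fun k : ℝ =>
        ‖Complex.I * (k : ℂ) ^ 2 * sphh' n k *
          ((sphj n k : ℂ) + Complex.I * (sphj' n k : ℂ))‖)
      (𝓝[>] (0 : ℝ)) Filter.atTop := by
  obtain ⟨m, rfl⟩ : ∃ m, n = m + 1 := ⟨n - 1, (Nat.succ_pred_eq_of_pos hn).symm⟩
  set pR : ℝ := ((2:ℝ)^(m+1) * ((m+1).factorial:ℝ))⁻¹ * Fint (m+1) 0 with hpR
  set qR : ℝ := ((2:ℝ)^(m+1) * ((m+1).factorial:ℝ))⁻¹ * (((m:ℝ)+1) * Fint (m+1) 0) with hqR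
  set vR : ℝ := ((↑(m+1):ℝ)+1) * df (m+1) with hvR
  have hP := tendsto_P (m+1)
  have hQ := tendsto_Q m
  have hV := tendsto_V (m+1)
  -- arithmetic identity
  have hdf : df (m+1) ≠ 0 := (df_pos (m+1)).ne'
  have hden : (2*((m:ℝ)+1)+1) ≠ 0 := by positivity
  have hfac : (((m+1).factorial : ℕ):ℝ) ≠ 0 := Nat.cast_ne_zero.mpr (Nat.factorial_ne_zero _)
  have h2p : ((2:ℝ))^(m+1) ≠ 0 := by positivity
  have hF0 : Fint (m+1) 0 = 2^(m+1) * (((m+1).factorial : ℕ):ℝ) / ((2*(↑(m+1):ℝ)+1) * df (m+1)) := by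
    refine eq_div_of_mul_eq (by push_cast; exact mul_ne_zero hden hdf) ?_
    exact Fint_fact (m+1)
  have key : vR * qR = (((m:ℝ)+1)*(((m:ℝ)+1)+1))/(2*((m:ℝ)+1)+1) := by
    rw [hvR, hqR, hF0]
    push_cast
    field_simp
  -- complex limits
  have hkC : Tendsto (fun k : ℝ => (k:ℂ)) (𝓝[>](0:ℝ)) (𝓝 0) := by
    have h1 : Tendsto (fun k : ℝ => k) (𝓝[>](0:ℝ)) (𝓝 0) :=
      Filter.tendsto_id.mono_left nhdsWithin_le_nhds
    exact (Complex.continuous_ofReal.tendsto 0).comp h1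
  have hPc : Tendsto (fun k : ℝ => (((k⁻¹)^(m+1) * sphj (m+1) k : ℝ) : ℂ)) (𝓝[>](0:ℝ))
      (𝓝 (pR : ℂ)) := (Complex.continuous_ofReal.tendsto pR).comp hP
  have hQc : Tendsto (fun k : ℝ => ((k * (k⁻¹)^(m+1) * sphj' (m+1) k : ℝ) : ℂ)) (𝓝[>](0:ℝ))
      (𝓝 (qR : ℂ)) := (Complex.continuous_ofReal.tendsto qR).comp hQ
  have hVc : Tendsto (fun k : ℝ => ((k^(m+1+2) * sphy' (m+1) k : ℝ) : ℂ)) (𝓝[>](0:ℝ))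
      (𝓝 (vR : ℂ)) := (Complex.continuous_ofReal.tendsto vR).comp hV
  have hk1 : Tendsto (fun k : ℝ => (k:ℂ)^(2*(m+1)+2)) (𝓝[>](0:ℝ)) (𝓝 0) := by
    simpa using hkC.pow (2*(m+1)+2)
  have hk2 : Tendsto (fun k : ℝ => (k:ℂ)^(2*(m+1)+1)) (𝓝[>](0:ℝ)) (𝓝 0) := by
    simpa using hkC.pow (2*(m+1)+1)
  have t1 := (hk1.mul hQc).mul hPc
  have t2 := ((tendsto_const_nhds (x := Complex.I)).mul hk2).mul (hQc.pow 2)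
  have t3 := (((tendsto_const_nhds (x := Complex.I)).mul hkC).mul hVc).mul hPc
  have t4 := hVc.mul hQc
  have total := (tendsto_const_nhds (x := Complex.I)).mul (((t1.add t2).add t3).sub t4)
  have hL : (Complex.I * ((0:ℂ) * (qR:ℂ) * (pR:ℂ) + Complex.I * 0 * ((qR:ℂ))^2
        + Complex.I * 0 * (vR:ℂ) * (pR:ℂ) - (vR:ℂ) * (qR:ℂ)))
      = -Complex.I * ((↑(m+1) : ℂ) * ((↑(m+1):ℂ) + 1)) / (2 * (↑(m+1):ℂ) + 1) := by
    have hkey : (vR:ℂ) * (qR:ℂ) = (((m:ℂ)+1)*(((m:ℂ)+1)+1))/(2*((m:ℂ)+1)+1) := by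
      have h := congrArg (fun r : ℝ => (r:ℂ)) key
      push_cast at h
      simpa using h
    simp only [zero_mul, mul_zero, zero_add, zero_sub, mul_neg]
    rw [hkey]
    push_cast
    ring
  rw [hL] at total
  have main : Filter.Tendsto
      (fun k : ℝ => (k : ℂ) *
        (Complex.I * (k : ℂ) ^ 2 * sphh' (m+1) k *
          ((sphj (m+1) k : ℂ) + Complex.I * (sphj' (m+1) k : ℂ))))
      (𝓝[>] (0 : ℝ)) (𝓝 (-Complex.I * ((↑(m+1) : ℂ) * ((↑(m+1):ℂ) + 1)) / (2 * (↑(m+1):ℂ) + 1))) := by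
    refine total.congr' ?_
    filter_upwards [eventually_mem_nhdsWithin] with k hk
    have hkne : (k:ℝ) ≠ 0 := ne_of_gt hk
    have hkcne : (k:ℂ) ≠ 0 := Complex.ofReal_ne_zero.mpr hkne
    rw [sphh'_eq (m+1) k hkne]
    push_cast
    simp only [inv_pow]
    have hkpow : ((k:ℂ))^(m+1) ≠ 0 := pow_ne_zero _ hkcne
    have hI3 : Complex.I ^ 3 = -Complex.I := by
      rw [show (3:ℕ) = 2+1 from rfl, pow_succ, Complex.I_sq]; ring
    field_simp
    ring_nf
    simp only [hI3, Complex.I_sq]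
    field_simp
    ring
  refine ⟨main, ?_⟩
  have hLne : (-Complex.I * ((↑(m+1) : ℂ) * ((↑(m+1):ℂ) + 1)) / (2 * (↑(m+1):ℂ) + 1)) ≠ 0 := by
    apply div_ne_zero
    · refine mul_ne_zero (neg_ne_zero.mpr Complex.I_ne_zero) (mul_ne_zero ?_ ?_)
      · exact Nat.cast_ne_zero.mpr (Nat.succ_ne_zero m)
      · have h0 : ((m+2 : ℕ):ℂ) ≠ 0 := Nat.cast_ne_zero.mpr (by omega)
        intro h
        apply h0
        push_cast at h ⊢
        linear_combination h
    · have h0 : ((2*m+3 : ℕ):ℂ) ≠ 0 := Nat.cast_ne_zero.mpr (by omega)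
      intro h
      apply h0
      push_cast at h ⊢
      linear_combination h
  have hpos : 0 < ‖(-Complex.I * ((↑(m+1) : ℂ) * ((↑(m+1):ℂ) + 1)) / (2 * (↑(m+1):ℂ) + 1))‖ :=
    norm_pos_iff.mpr hLne
  have hinv : Tendsto (fun k : ℝ => k⁻¹) (𝓝[>](0:ℝ)) atTop := tendsto_inv_nhdsGT_zero
  have hmul := Filter.Tendsto.pos_mul_atTop hpos main.norm hinv
  refine hmul.congr' ?_
  filter_upwards [eventually_mem_nhdsWithin] with k hk
  have hkpos : (0:ℝ) < k := hk
  rw [norm_mul, Complex.norm_real, Real.norm_eq_abs, abs_of_pos hkpos]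
  field_simp
end

section
/- For every natural number n and every real k > 0, the spherical Hankel function of the first kind does not vanish: h_n(k) ≠ 0. -/
open Real Complex Filter Topology

open Polynomial in
/-- One step of the polynomial recurrence for the numerators of the Rayleigh iterates. -/
noncomputable def polyStep (n : ℕ) (pq : Polynomial ℝ × Polynomial ℝ) :
    Polynomial ℝ × Polynomial ℝ :=
  (X * derivative pq.1 - X * pq.2 - C (2 * (n : ℝ) + 1) * pq.1,
   X * pq.1 + X * derivative pq.2 - C (2 * (n : ℝ) + 1) * pq.2)

noncomputable def PQ : ℕ → Polynomial ℝ × Polynomial ℝ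
  | 0 => (1, 0)
  | n + 1 => polyStep n (PQ n)

noncomputable def RS : ℕ → Polynomial ℝ × Polynomial ℝ
  | 0 => (0, 1)
  | n + 1 => polyStep n (RS n)

open Polynomial in
lemma sph_ode (f : ℕ → Polynomial ℝ × Polynomial ℝ)
    (h1 : derivative (f 0).1 = 0) (h2 : derivative (f 0).2 = 0)
    (hf : ∀ n, f (n + 1) = polyStep n (f n)) : ∀ n,
    derivative (f (n + 1)).1 = (f (n + 1)).2 - X * (f n).1 ∧
    derivative (f (n + 1)).2 = -(f (n + 1)).1 - X * (f n).2 := by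
  intro n
  induction n with
  | zero =>
      rw [hf 0]
      simp only [polyStep, derivative_sub, derivative_add, derivative_mul, derivative_X,
        derivative_C, h1, h2, Nat.cast_zero, mul_zero, zero_add, map_one, derivative_zero,
        one_mul, mul_one, zero_mul, add_zero]
      constructor <;> ring
  | succ n ih =>
      obtain ⟨ih1, ih2⟩ := ih
      have hC : C (2 * ((n : ℝ) + 1) + 1) = C (2 * (n : ℝ) + 1) + 2 := by
        rw [show (2 * ((n : ℝ) + 1) + 1) = (2 * (n : ℝ) + 1) + 2 by ring, map_add, map_ofNat]
      rw [hf (n + 1)]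
      simp only [polyStep, Nat.cast_succ, hC, derivative_sub, derivative_add, derivative_mul,
        derivative_X, derivative_C, derivative_neg, ih1, ih2, one_mul, mul_one, zero_mul,
        mul_zero, add_zero, zero_add]
      rw [hf n]
      simp only [polyStep, derivative_sub, derivative_add, derivative_mul, derivative_X,
        derivative_C, derivative_ofNat, derivative_neg, one_mul, mul_one, zero_mul, mul_zero,
        add_zero, zero_add]
      constructor <;> ring

lemma sph_odePQ : ∀ n,
    Polynomial.derivative (PQ (n + 1)).1 = (PQ (n + 1)).2 - Polynomial.X * (PQ n).1 ∧
    Polynomial.derivative (PQ (n + 1)).2 = -(PQ (n + 1)).1 - Polynomial.X * (PQ n).2 :=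
  sph_ode PQ (by simp [PQ]) (by simp [PQ]) (fun n => rfl)

lemma sph_odeRS : ∀ n,
    Polynomial.derivative (RS (n + 1)).1 = (RS (n + 1)).2 - Polynomial.X * (RS n).1 ∧
    Polynomial.derivative (RS (n + 1)).2 = -(RS (n + 1)).1 - Polynomial.X * (RS n).2 :=
  sph_ode RS (by simp [RS]) (by simp [RS]) (fun n => rfl)

open Polynomial in
lemma sph_combo : ∀ n : ℕ,
    ((PQ n).1 * (RS (n + 1)).1 - (PQ (n + 1)).1 * (RS n).1 = -X ^ (2 * n + 1)) ∧
    ((PQ n).2 * (RS (n + 1)).2 - (PQ (n + 1)).2 * (RS n).2 = -X ^ (2 * n + 1)) ∧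
    ((PQ n).1 * (RS (n + 1)).2 + (PQ n).2 * (RS (n + 1)).1
      - (PQ (n + 1)).1 * (RS n).2 - (PQ (n + 1)).2 * (RS n).1 = 0) := by
  intro n
  induction n with
  | zero =>
      refine ⟨?_, ?_, ?_⟩ <;> simp [PQ, RS, polyStep]
  | succ n ih =>
      obtain ⟨ih1, ih2, ih3⟩ := ih
      obtain ⟨hp1, hp2⟩ := sph_odePQ n
      obtain ⟨hr1, hr2⟩ := sph_odeRS n
      have e1 : PQ (n + 2) = polyStep (n + 1) (PQ (n + 1)) := rfl
      have e2 : RS (n + 2) = polyStep (n + 1) (RS (n + 1)) := rfl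
      refine ⟨?_, ?_, ?_⟩
      · rw [e1, e2]
        simp only [polyStep, hp1, hp2, hr1, hr2]
        linear_combination (X : Polynomial ℝ) ^ 2 * ih1
      · rw [e1, e2]
        simp only [polyStep, hp1, hp2, hr1, hr2]
        linear_combination (X : Polynomial ℝ) ^ 2 * ih2
      · rw [e1, e2]
        simp only [polyStep, hp1, hp2, hr1, hr2]
        linear_combination (X : Polynomial ℝ) ^ 2 * ih3

open Polynomial in
lemma sph_rep (g0 : ℝ → ℝ) (f : ℕ → Polynomial ℝ × Polynomial ℝ)
    (hf : ∀ n, f (n + 1) = polyStep n (f n))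
    (h0 : ∀ x : ℝ, x ≠ 0 →
      g0 x = ((f 0).1.eval x * Real.sin x + (f 0).2.eval x * Real.cos x) / x ^ (2 * 0 + 1)) :
    ∀ n, ∀ x : ℝ, x ≠ 0 → (sphStep^[n] g0) x
      = ((f n).1.eval x * Real.sin x + (f n).2.eval x * Real.cos x) / x ^ (2 * n + 1) := by
  intro n
  induction n with
  | zero => intro x hx; simpa using h0 x hx
  | succ n ih =>
      intro x hx
      rw [Function.iterate_succ_apply']
      show deriv (sphStep^[n] g0) x / x = _
      have hev : sphStep^[n] g0 =ᶠ[nhds x]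
          fun t => ((f n).1.eval t * Real.sin t + (f n).2.eval t * Real.cos t)
            / t ^ (2 * n + 1) := by
        filter_upwards [isOpen_compl_singleton.mem_nhds (by simpa using hx : x ∈ ({0}ᶜ : Set ℝ))]
          with t ht
        exact ih t ht
      rw [hev.deriv_eq]
      have hD := ((((f n).1.hasDerivAt x).mul (Real.hasDerivAt_sin x)).add
        (((f n).2.hasDerivAt x).mul (Real.hasDerivAt_cos x))).div
        (hasDerivAt_pow (2 * n + 1) x) (pow_ne_zero _ hx)
      have hD' : deriv (fun t => ((f n).1.eval t * Real.sin t + (f n).2.eval t * Real.cos t)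
          / t ^ (2 * n + 1)) x = _ := hD.deriv
      rw [hD', hf n]
      simp only [polyStep, Pi.add_apply, Pi.mul_apply, eval_sub, eval_add, eval_mul, eval_X, eval_C, Nat.add_sub_cancel,
        Nat.cast_add, Nat.cast_mul, Nat.cast_one, Nat.cast_ofNat]
      have hxp : x ^ (2 * n + 1) ≠ 0 := pow_ne_zero _ hx
      field_simp
      ring

/-- The spherical Hankel function of the first kind has no positive real zeros. -/
theorem sphh_ne_zero (n : ℕ) (k : ℝ) (hk : 0 < k) : sphh n k ≠ 0 := by
  intro h
  have hk0 : k ≠ 0 := ne_of_gt hk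
  have hj : sphj n k = 0 := by
    have := congrArg Complex.re h
    simpa [sphh] using this
  have hy : sphy n k = 0 := by
    have := congrArg Complex.im h
    simpa [sphh] using this
  have hpow : (-k) ^ n ≠ 0 := pow_ne_zero _ (neg_ne_zero.mpr hk0)
  have hu : (sphStep^[n] (fun t => Real.sin t / t)) k = 0 := by
    have := hj; rw [sphj] at this
    exact (mul_eq_zero.mp this).resolve_left hpow
  have hv : (sphStep^[n] (fun t => Real.cos t / t)) k = 0 := by
    have := hy; rw [sphy, neg_eq_zero] at this
    exact (mul_eq_zero.mp this).resolve_left hpow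
  have repu := sph_rep (fun t => Real.sin t / t) PQ (fun n => rfl)
      (fun x hx => by simp [PQ]) n k hk0
  have repv := sph_rep (fun t => Real.cos t / t) RS (fun n => rfl)
      (fun x hx => by simp [RS]) n k hk0
  rw [repu] at hu
  rw [repv] at hv
  have hxp : k ^ (2 * n + 1) ≠ 0 := pow_ne_zero _ hk0
  have hu' : (PQ n).1.eval k * Real.sin k + (PQ n).2.eval k * Real.cos k = 0 :=
    (div_eq_zero_iff.mp hu).resolve_right hxp
  have hv' : (RS n).1.eval k * Real.sin k + (RS n).2.eval k * Real.cos k = 0 :=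
    (div_eq_zero_iff.mp hv).resolve_right hxp
  obtain ⟨cA, cB, cC⟩ := sph_combo n
  have c1 := congrArg (Polynomial.eval k) cA
  have c2 := congrArg (Polynomial.eval k) cB
  have c3 := congrArg (Polynomial.eval k) cC
  simp only [Polynomial.eval_sub, Polynomial.eval_add, Polynomial.eval_mul, Polynomial.eval_neg,
    Polynomial.eval_pow, Polynomial.eval_X, Polynomial.eval_zero] at c1 c2 c3
  have pyth : Real.sin k ^ 2 + Real.cos k ^ 2 = 1 := Real.sin_sq_add_cos_sq k
  have hzero : k ^ (2 * n + 1) = 0 := by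
    linear_combination
      (-((RS (n+1)).1.eval k * Real.sin k) - (RS (n+1)).2.eval k * Real.cos k) * hu'
      + ((PQ (n+1)).1.eval k * Real.sin k + (PQ (n+1)).2.eval k * Real.cos k) * hv'
      + Real.sin k ^ 2 * c1 + Real.cos k ^ 2 * c2 + Real.sin k * Real.cos k * c3
      - k ^ (2 * n + 1) * pyth
  exact hxp hzero
end

section
/- For every natural number n and every real k > 0, the derivative of the spherical Hankel function of the first kind does not vanish: h_n′(k) ≠ 0. -/
open Real Complex Filter Topology

open Polynomial in
/-- The pair of real polynomials `(Aₙ, Bₙ)` such that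
`(x⁻¹d/dx)^n (e^{ix}/x) = e^{ix} (Aₙ(x) + i Bₙ(x)) / x^(2n+1)`. -/
noncomputable def sphAB : ℕ → Polynomial ℝ × Polynomial ℝ
  | 0 => (1, 0)
  | n+1 =>
    ( X * derivative (sphAB n).1 - C (2*n+1 : ℝ) * (sphAB n).1 - X * (sphAB n).2,
      X * derivative (sphAB n).2 - C (2*n+1 : ℝ) * (sphAB n).2 + X * (sphAB n).1 )

open Polynomial in
/-- Aₙ, Bₙ satisfy the second-order ODE inherited from the Bessel equation, and the
Wronskian-type invariant `Aₙ′Bₙ − AₙBₙ′ − Aₙ² − Bₙ² = −X^(2n)`. -/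
lemma sphAB_invariant (n : ℕ) :
    X * derivative (derivative (sphAB n).1)
      = 2 * X * derivative (sphAB n).2 + (2*n : ℝ) • derivative (sphAB n).1
        - (2*n : ℝ) • (sphAB n).2 ∧
    X * derivative (derivative (sphAB n).2)
      = -(2 * X * derivative (sphAB n).1) + (2*n : ℝ) • derivative (sphAB n).2
        + (2*n : ℝ) • (sphAB n).1 ∧
    derivative (sphAB n).1 * (sphAB n).2 - (sphAB n).1 * derivative (sphAB n).2
      - (sphAB n).1 ^ 2 - (sphAB n).2 ^ 2 = -(X ^ (2*n)) := by
  induction n with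
  | zero => simp [sphAB]
  | succ n ih =>
    obtain ⟨hA, hB, hE⟩ := ih
    set A := (sphAB n).1 with hAdef
    set B := (sphAB n).2 with hBdef
    have h1 : (sphAB (n+1)).1 = X * derivative A - C (2*n+1 : ℝ) * A - X * B := rfl
    have h2 : (sphAB (n+1)).2 = X * derivative B - C (2*n+1 : ℝ) * B + X * A := rfl
    rw [smul_eq_C_mul, smul_eq_C_mul] at hA hB
    simp only [map_add, map_mul, map_one, map_ofNat, Polynomial.C_eq_natCast] at hA hB
    have dA1 : derivative (sphAB (n+1)).1 = (sphAB (n+1)).2 - X * A := by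
      rw [h1, h2]
      simp only [derivative_sub, derivative_add, derivative_mul, derivative_X, derivative_C,
        derivative_one, derivative_natCast, derivative_ofNat,
        one_mul, zero_mul, zero_add, map_add, map_mul, map_one, map_ofNat,
        Polynomial.C_eq_natCast]
      linear_combination hA
    have dB1 : derivative (sphAB (n+1)).2 = -(sphAB (n+1)).1 - X * B := by
      rw [h1, h2]
      simp only [derivative_sub, derivative_add, derivative_mul, derivative_X, derivative_C,
        derivative_one, derivative_natCast, derivative_ofNat,
        one_mul, zero_mul, zero_add, map_add, map_mul, map_one, map_ofNat,
        Polynomial.C_eq_natCast]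
      linear_combination hB
    refine ⟨?_, ?_, ?_⟩
    · rw [dA1, derivative_sub, dB1, derivative_mul, derivative_X, smul_eq_C_mul, smul_eq_C_mul]
      simp only [map_add, map_mul, map_one, map_ofNat, Polynomial.C_eq_natCast] at h1 h2 ⊢
      push_cast
      linear_combination (X : Polynomial ℝ) * h1
    · rw [dB1, derivative_sub, derivative_neg, dA1, derivative_mul, derivative_X,
        smul_eq_C_mul, smul_eq_C_mul]
      simp only [map_add, map_mul, map_one, map_ofNat, Polynomial.C_eq_natCast] at h1 h2 ⊢
      push_cast
      linear_combination (X : Polynomial ℝ) * h2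
    · rw [dA1, dB1, h1, h2]
      simp only [map_add, map_mul, map_one, map_ofNat, Polynomial.C_eq_natCast]
      have : (2:ℕ) * (n+1) = 2*n + 2 := by ring
      rw [this, pow_add]
      linear_combination (X:Polynomial ℝ)^2 * hE

open Polynomial in
/-- Derivative of the generic closed form `(a·sin + b·cos)/x^m` at `x ≠ 0`. -/
lemma hasDerivAt_closed (a b : Polynomial ℝ) (m : ℕ) {x : ℝ} (hx : x ≠ 0) :
    HasDerivAt (fun t => (a.eval t * Real.sin t + b.eval t * Real.cos t) / t ^ m)
      ((((a.derivative.eval x - b.eval x) * Real.sin x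
          + (a.eval x + b.derivative.eval x) * Real.cos x) * x ^ m
        - (a.eval x * Real.sin x + b.eval x * Real.cos x) * (m * x ^ (m-1))) / (x ^ m) ^ 2)
      x := by
  have hn : HasDerivAt (fun t => a.eval t * Real.sin t + b.eval t * Real.cos t)
      ((a.derivative.eval x - b.eval x) * Real.sin x
        + (a.eval x + b.derivative.eval x) * Real.cos x) x := by
    have h1 := (a.hasDerivAt x).mul (Real.hasDerivAt_sin x)
    have h2 := (b.hasDerivAt x).mul (Real.hasDerivAt_cos x)
    refine (h1.add h2).congr_deriv ?_
    ring
  exact hn.div (hasDerivAt_pow m x) (pow_ne_zero m hx)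

open Polynomial in
/-- Derivative of the generic closed form `(a·cos − b·sin)/x^m` at `x ≠ 0`. -/
lemma hasDerivAt_closed' (a b : Polynomial ℝ) (m : ℕ) {x : ℝ} (hx : x ≠ 0) :
    HasDerivAt (fun t => (a.eval t * Real.cos t - b.eval t * Real.sin t) / t ^ m)
      ((((a.derivative.eval x - b.eval x) * Real.cos x
          - (a.eval x + b.derivative.eval x) * Real.sin x) * x ^ m
        - (a.eval x * Real.cos x - b.eval x * Real.sin x) * (m * x ^ (m-1))) / (x ^ m) ^ 2)
      x := by
  have hn : HasDerivAt (fun t => a.eval t * Real.cos t - b.eval t * Real.sin t)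
      ((a.derivative.eval x - b.eval x) * Real.cos x
        - (a.eval x + b.derivative.eval x) * Real.sin x) x := by
    have h1 := (a.hasDerivAt x).mul (Real.hasDerivAt_cos x)
    have h2 := (b.hasDerivAt x).mul (Real.hasDerivAt_sin x)
    refine (h1.sub h2).congr_deriv ?_
    ring
  exact hn.div (hasDerivAt_pow m x) (pow_ne_zero m hx)

open Polynomial in
/-- Closed form for the Rayleigh iterates of `sin x / x` and `cos x / x` on `(0,∞)`. -/
lemma sphStep_closed (n : ℕ) : ∀ x ∈ Set.Ioi (0:ℝ),
    sphStep^[n] (fun t => Real.sin t / t) x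
      = ((sphAB n).1.eval x * Real.sin x + (sphAB n).2.eval x * Real.cos x) / x ^ (2*n+1) ∧
    sphStep^[n] (fun t => Real.cos t / t) x
      = ((sphAB n).1.eval x * Real.cos x - (sphAB n).2.eval x * Real.sin x) / x ^ (2*n+1) := by
  induction n with
  | zero => intro x hx; simp [sphAB]
  | succ n ih =>
    intro x hx
    have hx0 : (0:ℝ) < x := hx
    have hxne : x ≠ 0 := ne_of_gt hx0
    set A := (sphAB n).1 with hAdef
    set B := (sphAB n).2 with hBdef
    have h1 : (sphAB (n+1)).1 = X * derivative A - C (2*n+1 : ℝ) * A - X * B := rfl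
    have h2 : (sphAB (n+1)).2 = X * derivative B - C (2*n+1 : ℝ) * B + X * A := rfl
    have hmem : Set.Ioi (0:ℝ) ∈ nhds x := isOpen_Ioi.mem_nhds hx0
    have heq1 : sphStep^[n] (fun t => Real.sin t / t)
        =ᶠ[nhds x] fun t => (A.eval t * Real.sin t + B.eval t * Real.cos t) / t ^ (2*n+1) :=
      Filter.eventuallyEq_of_mem hmem (fun y hy => (ih y hy).1)
    have heq2 : sphStep^[n] (fun t => Real.cos t / t)
        =ᶠ[nhds x] fun t => (A.eval t * Real.cos t - B.eval t * Real.sin t) / t ^ (2*n+1) :=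
      Filter.eventuallyEq_of_mem hmem (fun y hy => (ih y hy).2)
    have hd1 := ((hasDerivAt_closed A B (2*n+1) hxne).congr_of_eventuallyEq heq1).deriv
    have hd2 := ((hasDerivAt_closed' A B (2*n+1) hxne).congr_of_eventuallyEq heq2).deriv
    rw [Function.iterate_succ_apply', Function.iterate_succ_apply']
    constructor
    · show deriv (sphStep^[n] fun t => Real.sin t / t) x / x = _
      rw [hd1, h1, h2]
      simp only [eval_sub, eval_add, eval_mul, eval_X, eval_C]
      have hp : (2*(n+1)+1) = (2*n+1) + 2 := by ring
      rw [hp]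
      have h2n : 2*n+1-1 = 2*n := by omega
      rw [h2n]
      field_simp
      push_cast
      ring
    · show deriv (sphStep^[n] fun t => Real.cos t / t) x / x = _
      rw [hd2, h1, h2]
      simp only [eval_sub, eval_add, eval_mul, eval_X, eval_C]
      have hp : (2*(n+1)+1) = (2*n+1) + 2 := by ring
      rw [hp]
      have h2n : 2*n+1-1 = 2*n := by omega
      rw [h2n]
      field_simp
      push_cast
      ring

open Polynomial in
/-- `sphj n` agrees near any positive point with a polynomial-trig closed form. -/
lemma sphj_eventuallyEq (n : ℕ) {k : ℝ} (hk : 0 < k) :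
    sphj n =ᶠ[nhds k] fun t =>
      ((((-1:ℝ)^n • (sphAB n).1).eval t) * Real.sin t
        + (((-1:ℝ)^n • (sphAB n).2).eval t) * Real.cos t) / t ^ (n+1) := by
  refine Filter.eventuallyEq_of_mem (isOpen_Ioi.mem_nhds hk) (fun y hy => ?_)
  have hy0 : (0:ℝ) < y := hy
  have hyne : y ≠ 0 := ne_of_gt hy0
  rw [sphj, (sphStep_closed n y hy).1]
  simp only [eval_smul, smul_eq_mul]
  rw [neg_pow, show 2*n+1 = n + (n+1) by ring, pow_add]
  field_simp

open Polynomial in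
lemma sphy_eventuallyEq (n : ℕ) {k : ℝ} (hk : 0 < k) :
    sphy n =ᶠ[nhds k] fun t =>
      (((-(-1:ℝ)^n • (sphAB n).1).eval t) * Real.cos t
        - ((-(-1:ℝ)^n • (sphAB n).2).eval t) * Real.sin t) / t ^ (n+1) := by
  refine Filter.eventuallyEq_of_mem (isOpen_Ioi.mem_nhds hk) (fun y hy => ?_)
  have hy0 : (0:ℝ) < y := hy
  have hyne : y ≠ 0 := ne_of_gt hy0
  rw [sphy, (sphStep_closed n y hy).2]
  simp only [eval_smul, smul_eq_mul]
  rw [neg_pow, show 2*n+1 = n + (n+1) by ring, pow_add]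
  field_simp
  ring

/-- The derivative of the spherical Hankel function of the first kind has no
positive real zeros. -/
theorem sphh'_ne_zero (n : ℕ) (k : ℝ) (hk : 0 < k) : sphh' n k ≠ 0 := by
  classical
  have hkne : k ≠ 0 := ne_of_gt hk
  set A := (sphAB n).1 with hAdef
  set B := (sphAB n).2 with hBdef
  set a := A.eval k with hadef
  set b := B.eval k with hbdef
  set a' := A.derivative.eval k with ha'def
  set b' := B.derivative.eval k with hb'def
  set s := Real.sin k with hsdef
  set co := Real.cos k with hcodef
  have hJd := (hasDerivAt_closed ((-1:ℝ)^n • A) ((-1:ℝ)^n • B) (n+1)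
      hkne).congr_of_eventuallyEq (sphj_eventuallyEq n hk)
  have hYd := (hasDerivAt_closed' (-(-1:ℝ)^n • A) (-(-1:ℝ)^n • B) (n+1)
      hkne).congr_of_eventuallyEq (sphy_eventuallyEq n hk)
  have hH := (hJd.ofReal_comp).add ((hYd.ofReal_comp).const_mul Complex.I)
  intro hzero
  rw [sphh', show sphh n = (fun x : ℝ => ((sphj n x : ℝ) : ℂ) + Complex.I * ((sphy n x : ℝ) : ℂ))
    from rfl] at hzero
  rw [show (fun x : ℝ => ((sphj n x : ℝ) : ℂ) + Complex.I * ((sphy n x : ℝ) : ℂ)) = ((fun y : ℝ => ((sphj n y : ℝ) : ℂ)) + fun y : ℝ => Complex.I * ((sphy n y : ℝ) : ℂ)) from rfl, hH.deriv] at hzero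
  simp only [Complex.ext_iff, Complex.add_re, Complex.add_im, Complex.ofReal_re,
    Complex.ofReal_im, Complex.mul_re, Complex.mul_im, Complex.I_re, Complex.I_im,
    Complex.zero_re, Complex.zero_im, zero_mul, one_mul, zero_sub, zero_add, mul_zero,
    neg_eq_zero, add_zero, neg_zero] at hzero
  obtain ⟨hu, hv⟩ := hzero
  have hpow : ((k:ℝ) ^ (n+1)) ^ 2 ≠ 0 := pow_ne_zero _ (pow_ne_zero _ hkne)
  have hkn : (k:ℝ) ^ n ≠ 0 := pow_ne_zero _ hkne
  have hsgn : ((-1:ℝ))^n ≠ 0 := pow_ne_zero _ (by norm_num)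
  set c := k * a' - (n+1) * a - k * b with hcdef
  set d := k * b' - (n+1) * b + k * a with hddef
  have h1 : c * s + d * co = 0 := by
    have hnum := (div_eq_zero_iff.mp hu).resolve_right hpow
    simp only [Polynomial.eval_smul, Polynomial.derivative_smul, smul_eq_mul,
      Nat.add_sub_cancel] at hnum
    rw [pow_succ] at hnum
    push_cast at hnum
    have key : ((-1:ℝ)^n * k^n) * (c * s + d * co) = 0 := by
      rw [hcdef, hddef]; linear_combination hnum
    rcases mul_eq_zero.mp key with h | h
    · exact absurd h (mul_ne_zero hsgn hkn)
    · exact h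
  have h2 : c * co - d * s = 0 := by
    have hnum := (div_eq_zero_iff.mp hv).resolve_right hpow
    simp only [Polynomial.eval_smul, Polynomial.derivative_smul, smul_eq_mul,
      Nat.add_sub_cancel] at hnum
    rw [pow_succ] at hnum
    push_cast at hnum
    have key : (-((-1:ℝ)^n) * k^n) * (c * co - d * s) = 0 := by
      rw [hcdef, hddef]; linear_combination hnum
    rcases mul_eq_zero.mp key with h | h
    · exact absurd h (mul_ne_zero (neg_ne_zero.mpr hsgn) hkn)
    · exact h
  have hpyth : s^2 + co^2 = 1 := by
    rw [hsdef, hcodef]; exact Real.sin_sq_add_cos_sq k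
  have hc : c = 0 := by linear_combination s * h1 + co * h2 - c * hpyth
  have hd : d = 0 := by linear_combination co * h1 - s * h2 - d * hpyth
  have hE := (sphAB_invariant n).2.2
  have heval : a' * b - a * b' - a^2 - b^2 = -(k^(2*n)) := by
    have := congrArg (Polynomial.eval k) hE
    simpa [hadef, hbdef, ha'def, hb'def] using this
  have hfinal : k * (a' * b - a * b' - a^2 - b^2) = 0 := by
    linear_combination b * hc - a * hd
  rw [heval] at hfinal
  simp only [mul_neg, neg_eq_zero, mul_eq_zero] at hfinal
  rcases hfinal with h | h
  · exact hkne h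
  · exact pow_ne_zero _ hkne h
end

section
/- For every natural number n and every real k > 0, the spherical Bessel function of the first kind and its derivative have no common zero: it is not the case that j_n(k) = 0 and j_n′(k) = 0 simultaneously. -/
open Real Complex Filter Topology
open scoped ContDiff

namespace SphAux

/-- iterates of the Rayleigh operator -/
noncomputable def u (f : ℝ → ℝ) (n : ℕ) : ℝ → ℝ := sphStep^[n] f

lemma u_succ (f : ℝ → ℝ) (n : ℕ) (x : ℝ) :
    u f (n+1) x = deriv (u f n) x / x := by
  simp [u, Function.iterate_succ_apply', sphStep]

lemma u_succ_fun (f : ℝ → ℝ) (n : ℕ) :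
    u f (n+1) = fun x => deriv (u f n) x / x := funext (u_succ f n)

lemma contDiffOn_u (f : ℝ → ℝ) (hf : ContDiffOn ℝ ∞ f {x : ℝ | x ≠ 0}) (n : ℕ) :
    ContDiffOn ℝ ∞ (u f n) {x : ℝ | x ≠ 0} := by
  induction n with
  | zero => exact hf
  | succ n ih =>
    rw [u_succ_fun]
    exact (ih.deriv_of_isOpen isOpen_ne (by norm_num)).div contDiffOn_id
      (fun x hx => hx)

lemma differentiableAt_u (f : ℝ → ℝ) (hf : ContDiffOn ℝ ∞ f {x : ℝ | x ≠ 0})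
    (n : ℕ) {x : ℝ} (hx : x ≠ 0) : DifferentiableAt ℝ (u f n) x :=
  ((contDiffOn_u f hf n).contDiffAt (isOpen_ne.mem_nhds hx)).differentiableAt
    (by norm_num)

lemma hasDerivAt_u (f : ℝ → ℝ) (hf : ContDiffOn ℝ ∞ f {x : ℝ | x ≠ 0})
    (n : ℕ) {x : ℝ} (hx : x ≠ 0) :
    HasDerivAt (u f n) (x * u f (n+1) x) x := by
  have h := (differentiableAt_u f hf n hx).hasDerivAt
  have : x * u f (n+1) x = deriv (u f n) x := by
    rw [u_succ]; field_simp
  rwa [this]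

/-- the three-term recurrence, by induction from the base case -/
lemma recurrence (f : ℝ → ℝ) (hf : ContDiffOn ℝ ∞ f {x : ℝ | x ≠ 0})
    (h0 : ∀ x : ℝ, x ≠ 0 → x^2 * u f 2 x + 3 * u f 1 x + u f 0 x = 0) :
    ∀ n : ℕ, ∀ x : ℝ, x ≠ 0 →
      x^2 * u f (n+2) x + (2*(n:ℝ)+3) * u f (n+1) x + u f n x = 0 := by
  intro n
  induction n with
  | zero => intro x hx; simpa using h0 x hx
  | succ n ih =>
    intro x hx
    set F : ℝ → ℝ := fun y => y^2 * u f (n+2) y + (2*(n:ℝ)+3) * u f (n+1) y + u f n y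
      with hF
    have hFd : HasDerivAt F
        (2*x * u f (n+2) x + x^2 * (x * u f (n+3) x)
          + (2*(n:ℝ)+3) * (x * u f (n+2) x) + x * u f (n+1) x) x := by
      have h1 := ((hasDerivAt_pow 2 x).mul (hasDerivAt_u f hf (n+2) hx))
      have h2 := (hasDerivAt_u f hf (n+1) hx).const_mul (2*(n:ℝ)+3)
      have h3 := hasDerivAt_u f hf n hx
      have := (h1.add h2).add h3
      refine this.congr_deriv ?_
      push_cast
      ring
    have hzero : deriv F x = 0 := by
      have hev : F =ᶠ[nhds x] (fun _ => (0:ℝ)) :=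
        Filter.eventuallyEq_of_mem (isOpen_ne.mem_nhds hx) (fun y hy => ih y hy)
      rw [hev.deriv_eq]
      simp
    have hD : 2*x * u f (n+2) x + x^2 * (x * u f (n+3) x)
          + (2*(n:ℝ)+3) * (x * u f (n+2) x) + x * u f (n+1) x = 0 := by
      rw [← hFd.deriv]; exact hzero
    have hx' : x ≠ 0 := hx
    have : x * (x^2 * u f (n+3) x + (2*((n:ℝ)+1)+3) * u f (n+2) x + u f (n+1) x) = 0 := by
      linear_combination hD
    have := mul_eq_zero.mp this
    rcases this with h | h
    · exact absurd h hx'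
    · push_cast
      linear_combination h

noncomputable def fsin : ℝ → ℝ := fun t => Real.sin t / t
noncomputable def fcos : ℝ → ℝ := fun t => Real.cos t / t

lemma contDiffOn_fsin : ContDiffOn ℝ ∞ fsin {x : ℝ | x ≠ 0} :=
  (Real.contDiff_sin.contDiffOn).div contDiffOn_id (fun x hx => hx)

lemma contDiffOn_fcos : ContDiffOn ℝ ∞ fcos {x : ℝ | x ≠ 0} :=
  (Real.contDiff_cos.contDiffOn).div contDiffOn_id (fun x hx => hx)

lemma u_fsin_one {x : ℝ} (hx : x ≠ 0) :
    u fsin 1 x = Real.cos x / x^2 - Real.sin x / x^3 := by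
  rw [u_succ]
  have h : HasDerivAt (u fsin 0)
      ((Real.cos x * x - Real.sin x * 1) / x^2) x :=
    (Real.hasDerivAt_sin x).div (hasDerivAt_id x) hx
  rw [h.deriv]
  field_simp

lemma u_fcos_one {x : ℝ} (hx : x ≠ 0) :
    u fcos 1 x = -Real.sin x / x^2 - Real.cos x / x^3 := by
  rw [u_succ]
  have h : HasDerivAt (u fcos 0)
      ((-Real.sin x * x - Real.cos x * 1) / x^2) x :=
    (Real.hasDerivAt_cos x).div (hasDerivAt_id x) hx
  rw [h.deriv]
  field_simp

lemma u_fsin_two {x : ℝ} (hx : x ≠ 0) :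
    u fsin 2 x = (-Real.sin x / x^2 - 3 * Real.cos x / x^3 + 3 * Real.sin x / x^4) / x := by
  rw [u_succ]
  congr 1
  have hev : u fsin 1 =ᶠ[nhds x] (fun y => Real.cos y / y^2 - Real.sin y / y^3) :=
    Filter.eventuallyEq_of_mem (isOpen_ne.mem_nhds hx) (fun y hy => u_fsin_one hy)
  rw [hev.deriv_eq]
  have h : HasDerivAt (fun y : ℝ => Real.cos y / y^2 - Real.sin y / y^3)
      ((-Real.sin x * x^2 - Real.cos x * (2*x)) / (x^2)^2
        - (Real.cos x * x^3 - Real.sin x * (3*x^2)) / (x^3)^2) x := by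
    have h1 : HasDerivAt (fun y : ℝ => Real.cos y / y^2)
        ((-Real.sin x * x^2 - Real.cos x * (2*x)) / (x^2)^2) x := by
      have := (Real.hasDerivAt_cos x).div (hasDerivAt_pow 2 x) (pow_ne_zero 2 hx)
      refine this.congr_deriv ?_
      all_goals (push_cast; ring)
    have h2 : HasDerivAt (fun y : ℝ => Real.sin y / y^3)
        ((Real.cos x * x^3 - Real.sin x * (3*x^2)) / (x^3)^2) x := by
      have := (Real.hasDerivAt_sin x).div (hasDerivAt_pow 3 x) (pow_ne_zero 3 hx)
      refine this.congr_deriv ?_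
      all_goals (push_cast; ring)
    exact h1.sub h2
  rw [h.deriv]
  field_simp
  ring

lemma u_fcos_two {x : ℝ} (hx : x ≠ 0) :
    u fcos 2 x = (-Real.cos x / x^2 + 3 * Real.sin x / x^3 + 3 * Real.cos x / x^4) / x := by
  rw [u_succ]
  congr 1
  have hev : u fcos 1 =ᶠ[nhds x] (fun y => -Real.sin y / y^2 - Real.cos y / y^3) :=
    Filter.eventuallyEq_of_mem (isOpen_ne.mem_nhds hx) (fun y hy => u_fcos_one hy)
  rw [hev.deriv_eq]
  have h : HasDerivAt (fun y : ℝ => -Real.sin y / y^2 - Real.cos y / y^3)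
      ((-Real.cos x * x^2 - (-Real.sin x) * (2*x)) / (x^2)^2
        - ((-Real.sin x) * x^3 - Real.cos x * (3*x^2)) / (x^3)^2) x := by
    have h1 : HasDerivAt (fun y : ℝ => -Real.sin y / y^2)
        ((-Real.cos x * x^2 - (-Real.sin x) * (2*x)) / (x^2)^2) x := by
      have := ((Real.hasDerivAt_sin x).neg).div (hasDerivAt_pow 2 x) (pow_ne_zero 2 hx)
      refine this.congr_deriv ?_
      all_goals (push_cast [Pi.neg_apply]; ring)
    have h2 : HasDerivAt (fun y : ℝ => Real.cos y / y^3)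
        (((-Real.sin x) * x^3 - Real.cos x * (3*x^2)) / (x^3)^2) x := by
      have := (Real.hasDerivAt_cos x).div (hasDerivAt_pow 3 x) (pow_ne_zero 3 hx)
      refine this.congr_deriv ?_
      all_goals (push_cast; ring)
    exact h1.sub h2
  rw [h.deriv]
  field_simp
  ring

lemma base_fsin : ∀ x : ℝ, x ≠ 0 → x^2 * u fsin 2 x + 3 * u fsin 1 x + u fsin 0 x = 0 := by
  intro x hx
  rw [u_fsin_two hx, u_fsin_one hx]
  show _ + (Real.sin x / x) = 0
  field_simp
  ring

lemma base_fcos : ∀ x : ℝ, x ≠ 0 → x^2 * u fcos 2 x + 3 * u fcos 1 x + u fcos 0 x = 0 := by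
  intro x hx
  rw [u_fcos_two hx, u_fcos_one hx]
  show _ + (Real.cos x / x) = 0
  field_simp
  ring

lemma rec_fsin : ∀ n : ℕ, ∀ x : ℝ, x ≠ 0 →
    x^2 * u fsin (n+2) x + (2*(n:ℝ)+3) * u fsin (n+1) x + u fsin n x = 0 :=
  recurrence fsin contDiffOn_fsin base_fsin

lemma rec_fcos : ∀ n : ℕ, ∀ x : ℝ, x ≠ 0 →
    x^2 * u fcos (n+2) x + (2*(n:ℝ)+3) * u fcos (n+1) x + u fcos n x = 0 :=
  recurrence fcos contDiffOn_fcos base_fcos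

/-- the Wronskian-type identity -/
lemma wronskian : ∀ n : ℕ, ∀ x : ℝ, x ≠ 0 →
    u fsin n x * u fcos (n+1) x - u fsin (n+1) x * u fcos n x = -(x^(2*n+3))⁻¹ := by
  intro n
  induction n with
  | zero =>
    intro x hx
    rw [u_fsin_one hx, u_fcos_one hx]
    show Real.sin x / x * _ - _ * (Real.cos x / x) = _
    have hpy := Real.sin_sq_add_cos_sq x
    field_simp
    linear_combination (-(x^4)) * hpy
  | succ n ih =>
    intro x hx
    have hs := rec_fsin n x hx
    have hc := rec_fcos n x hx
    have hW := ih x hx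
    have hx2 : (x:ℝ)^2 ≠ 0 := pow_ne_zero 2 hx
    -- express u (n+2) from the recurrences and substitute
    have hpow : (x^(2*(n+1)+3)) = x^(2*n+3) * x^2 := by ring
    rw [hpow]
    have hxp : (x^(2*n+3)) ≠ 0 := pow_ne_zero _ hx
    rw [mul_inv]
    have goal' : x^2 * (u fsin (n+1) x * u fcos (n+2) x - u fsin (n+2) x * u fcos (n+1) x)
        = u fsin n x * u fcos (n+1) x - u fsin (n+1) x * u fcos n x := by
      linear_combination u fsin (n+1) x * hc - u fcos (n+1) x * hs
    have : x^2 * (u fsin (n+1) x * u fcos (n+2) x - u fsin (n+2) x * u fcos (n+1) x)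
        = -(x^(2*n+3))⁻¹ := by rw [goal', hW]
    field_simp at this ⊢
    linarith [this]

lemma u_zero_of_common_zero (n : ℕ) (k : ℝ) (hk : 0 < k)
    (h1 : sphj n k = 0) (h2 : sphj' n k = 0) :
    u fsin n k = 0 ∧ u fsin (n+1) k = 0 := by
  have hk0 : k ≠ 0 := ne_of_gt hk
  have hkn : (-k)^n ≠ 0 := pow_ne_zero n (neg_ne_zero.mpr hk0)
  have hu0 : u fsin n k = 0 := by
    have : (-k)^n * u fsin n k = 0 := h1
    exact (mul_eq_zero.mp this).resolve_left hkn
  refine ⟨hu0, ?_⟩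
  -- compute the derivative of sphj n at k
  have hp : HasDerivAt (fun x : ℝ => (-x)^n) ((n:ℝ) * (-k)^(n-1) * (-1)) k := by
    have h1' : HasDerivAt (fun x : ℝ => -x) (-1) k := (hasDerivAt_id k).neg
    exact (hasDerivAt_pow n (-k)).comp k h1'
  have hd : HasDerivAt (sphj n)
      ((n:ℝ) * (-k)^(n-1) * (-1) * u fsin n k + (-k)^n * (k * u fsin (n+1) k)) k := by
    have := hp.mul (hasDerivAt_u fsin contDiffOn_fsin n hk0)
    exact this
  have : (n:ℝ) * (-k)^(n-1) * (-1) * u fsin n k + (-k)^n * (k * u fsin (n+1) k) = 0 := by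
    rw [← hd.deriv]; exact h2
  rw [hu0] at this
  simp only [mul_zero, zero_add] at this
  have := (mul_eq_zero.mp this).resolve_left hkn
  exact (mul_eq_zero.mp this).resolve_left hk0

end SphAux

/-- j_n and j_n′ have no common positive zero. -/
theorem sphj_sphj'_no_common_zero (n : ℕ) (k : ℝ) (hk : 0 < k) :
    ¬(sphj n k = 0 ∧ sphj' n k = 0) := by
  rintro ⟨h1, h2⟩
  have hk0 : k ≠ 0 := ne_of_gt hk
  obtain ⟨hu0, hu1⟩ := SphAux.u_zero_of_common_zero n k hk h1 h2
  have hW := SphAux.wronskian n k hk0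
  rw [hu0, hu1] at hW
  simp only [zero_mul, sub_zero] at hW
  have : (k^(2*n+3))⁻¹ > 0 := inv_pos.mpr (pow_pos hk _)
  linarith [hW]
end

section
/- For every natural number n, every real k > 0, and every complex coupling factor η with nonzero imaginary part, the eigenvalue of the combined Dirichlet (Burton–Miller) operator on the unit sphere is nonzero: i·k·h_n(k)·(j_n(k) − η·k·j_n′(k)) ≠ 0. (This expresses the uniqueness of the Burton–Miller boundary integral formulation for the exterior Dirichlet problem on the unit sphere at all frequencies when Im η ≠ 0.) -/
open Real Complex Filter Topology

section helpers
variable {u : ℝ → ℝ}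

lemma smooth_deriv (hu : ContDiffOn ℝ ((⊤:ℕ∞)) u {x : ℝ | x ≠ 0}) :
    ContDiffOn ℝ ((⊤:ℕ∞)) (deriv u) {x : ℝ | x ≠ 0} :=
  hu.deriv_of_isOpen isOpen_ne (by norm_num)

lemma smooth_step (hu : ContDiffOn ℝ ((⊤:ℕ∞)) u {x : ℝ | x ≠ 0}) :
    ContDiffOn ℝ ((⊤:ℕ∞)) (sphStep u) {x : ℝ | x ≠ 0} :=
  (smooth_deriv hu).div contDiffOn_id (fun _ hx => hx)

lemma diffAt (hu : ContDiffOn ℝ ((⊤:ℕ∞)) u {x : ℝ | x ≠ 0}) {x : ℝ} (hx : x ≠ 0) :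
    DifferentiableAt ℝ u x :=
  (hu.contDiffAt (isOpen_ne.mem_nhds hx)).differentiableAt (by norm_num)

lemma deriv_eq_step {x : ℝ} (hx : x ≠ 0) : deriv u x = x * sphStep u x := by
  simp only [sphStep]; field_simp

lemma step_ode (hu : ContDiffOn ℝ ((⊤:ℕ∞)) u {x : ℝ | x ≠ 0}) (c : ℝ)
    (h : ∀ x, x ≠ (0:ℝ) → x * deriv (sphStep u) x + c * sphStep u x + u x = 0) :
    ∀ x, x ≠ (0:ℝ) →
      x * deriv (sphStep (sphStep u)) x + (c+2) * sphStep (sphStep u) x + sphStep u x = 0 := by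
  intro x hx
  set v := sphStep u with hv_def
  have hv : ContDiffOn ℝ ((⊤:ℕ∞)) v {x : ℝ | x ≠ 0} := smooth_step hu
  have hdv : ∀ t : ℝ, t ≠ 0 → deriv v t = (-c * v t - u t) / t := by
    intro t ht
    have := h t ht
    field_simp
    linarith
  have hev : (fun t => deriv v t / t) =ᶠ[𝓝 x] (fun t => (-c * v t - u t) / t^2) := by
    filter_upwards [isOpen_ne.mem_nhds hx] with t ht
    rw [hdv t ht, div_div, sq]
  have hw : deriv (sphStep v) x = deriv (fun t => (-c * v t - u t) / t^2) x := by
    have : sphStep v = fun t => deriv v t / t := rfl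
    rw [this]
    exact hev.deriv_eq
  have hnum : DifferentiableAt ℝ (fun t => -c * v t - u t) x :=
    ((diffAt hv hx).const_mul (-c)).sub (diffAt hu hx)
  have hden : DifferentiableAt ℝ (fun t : ℝ => t^2) x := by fun_prop
  rw [hw, deriv_fun_div hnum hden (pow_ne_zero 2 hx)]
  have h1 : deriv (fun t => -c * v t - u t) x = -c * deriv v x - deriv u x := by
    rw [deriv_fun_sub ((diffAt hv hx).const_mul (-c)) (diffAt hu hx),
      deriv_const_mul _ (diffAt hv hx)]
  rw [h1, hdv x hx, deriv_eq_step hx, deriv_pow_field]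
  have hvx : sphStep v x = deriv v x / x := rfl
  rw [hvx, hdv x hx]
  have hux : sphStep u x = v x := rfl
  rw [hux]
  field_simp
  ring
end helpers

lemma base_ode {p q : ℝ → ℝ} (hp : ContDiff ℝ ((⊤:ℕ∞)) p) (hq : ContDiff ℝ ((⊤:ℕ∞)) q)
    (hpq : deriv p = q) (hqp : deriv q = fun t => -p t) :
    ∀ x, x ≠ (0:ℝ) →
      x * deriv (sphStep (fun t => p t / t)) x + 3 * sphStep (fun t => p t / t) x + p x / x = 0 := by
  intro x hx
  set u : ℝ → ℝ := fun t => p t / t with hu_def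
  have hdu : ∀ t : ℝ, t ≠ 0 → deriv u t = (q t * t - p t) / t^2 := by
    intro t ht
    rw [hu_def]
    rw [deriv_fun_div (hp.differentiable (by norm_num) t) differentiableAt_fun_id ht]
    simp [hpq]
  have hev : (fun t => deriv u t / t) =ᶠ[𝓝 x] (fun t => (q t * t - p t) / t^3) := by
    filter_upwards [isOpen_ne.mem_nhds hx] with t ht
    rw [hdu t ht, div_div]
    ring_nf
  have hw : deriv (sphStep u) x = deriv (fun t => (q t * t - p t) / t^3) x := by
    have : sphStep u = fun t => deriv u t / t := rfl
    rw [this]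
    exact hev.deriv_eq
  have hqd : DifferentiableAt ℝ q x := hq.differentiable (by norm_num) x
  have hpd : DifferentiableAt ℝ p x := hp.differentiable (by norm_num) x
  have hnum : DifferentiableAt ℝ (fun t => q t * t - p t) x :=
    (hqd.mul differentiableAt_fun_id).sub hpd
  have hden3 : DifferentiableAt ℝ (fun t : ℝ => t ^ 3) x := by fun_prop
  rw [hw, deriv_fun_div hnum hden3 (pow_ne_zero 3 hx)]
  have h1 : deriv (fun t => q t * t - p t) x = -p x * x := by
    rw [deriv_fun_sub (f := fun t => q t * t) (hqd.mul differentiableAt_fun_id) hpd, deriv_fun_mul hqd differentiableAt_fun_id]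
    simp [hpq, hqp]
  rw [h1, deriv_pow_field]
  have hux : sphStep u x = (q x * x - p x) / x^2 / x := by
    simp only [sphStep, hdu x hx]
  rw [hux]
  field_simp
  ring

lemma smooth_iter {u : ℝ → ℝ} (hu : ContDiffOn ℝ ((⊤:ℕ∞)) u {x : ℝ | x ≠ 0}) (n : ℕ) :
    ContDiffOn ℝ ((⊤:ℕ∞)) (sphStep^[n] u) {x : ℝ | x ≠ 0} := by
  induction n with
  | zero => exact hu
  | succ n ih => rw [Function.iterate_succ_apply']; exact smooth_step ih

lemma iter_ode {u : ℝ → ℝ} (hu : ContDiffOn ℝ ((⊤:ℕ∞)) u {x : ℝ | x ≠ 0})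
    (hb : ∀ x, x ≠ (0:ℝ) → x * deriv (sphStep u) x + 3 * sphStep u x + u x = 0) (n : ℕ) :
    ∀ x, x ≠ (0:ℝ) → x * deriv (sphStep^[n+1] u) x + (2*(n:ℝ)+3) * sphStep^[n+1] u x
      + sphStep^[n] u x = 0 := by
  induction n with
  | zero => simpa using hb
  | succ n ih =>
    intro x hx
    have key := step_ode (smooth_iter hu n) (2*(n:ℝ)+3) (fun x hx => by
      have := ih x hx
      simp only [Function.iterate_succ_apply'] at this
      exact this) x hx
    simp only [Function.iterate_succ_apply']
    push_cast
    linarith [key]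

noncomputable def FF (n : ℕ) : ℝ → ℝ := sphStep^[n] (fun t => Real.sin t / t)
noncomputable def GG (n : ℕ) : ℝ → ℝ := sphStep^[n] (fun t => Real.cos t / t)

lemma smooth_sinc : ContDiffOn ℝ ((⊤:ℕ∞)) (fun t => Real.sin t / t) {x : ℝ | x ≠ 0} :=
  Real.contDiff_sin.contDiffOn.div contDiffOn_id (fun _ hx => hx)
lemma smooth_cosc : ContDiffOn ℝ ((⊤:ℕ∞)) (fun t => Real.cos t / t) {x : ℝ | x ≠ 0} :=
  Real.contDiff_cos.contDiffOn.div contDiffOn_id (fun _ hx => hx)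

lemma FF_smooth (n : ℕ) : ContDiffOn ℝ ((⊤:ℕ∞)) (FF n) {x : ℝ | x ≠ 0} := smooth_iter smooth_sinc n
lemma GG_smooth (n : ℕ) : ContDiffOn ℝ ((⊤:ℕ∞)) (GG n) {x : ℝ | x ≠ 0} := smooth_iter smooth_cosc n

lemma FF_ode (n : ℕ) : ∀ x, x ≠ (0:ℝ) →
    x * deriv (FF (n+1)) x + (2*(n:ℝ)+3) * FF (n+1) x + FF n x = 0 :=
  iter_ode smooth_sinc
    (base_ode Real.contDiff_sin Real.contDiff_cos Real.deriv_sin Real.deriv_cos') n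

lemma GG_ode (n : ℕ) : ∀ x, x ≠ (0:ℝ) →
    x * deriv (GG (n+1)) x + (2*(n:ℝ)+3) * GG (n+1) x + GG n x = 0 :=
  iter_ode smooth_cosc
    (base_ode Real.contDiff_cos (Real.contDiff_sin.neg) Real.deriv_cos'
      (by funext t; simp)) n

lemma FF_succ (n : ℕ) (x : ℝ) : FF (n+1) x = deriv (FF n) x / x := by
  rw [FF, Function.iterate_succ_apply']; rfl

lemma GG_succ (n : ℕ) (x : ℝ) : GG (n+1) x = deriv (GG n) x / x := by
  rw [GG, Function.iterate_succ_apply']; rfl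

lemma wronskian (n : ℕ) : ∀ x : ℝ, x ≠ 0 →
    x^(2*n+3) * (FF n x * GG (n+1) x - FF (n+1) x * GG n x) = -1 := by
  induction n with
  | zero =>
    intro x hx
    have hds : deriv (fun t => Real.sin t / t) x = (Real.cos x * x - Real.sin x) / x^2 := by
      rw [deriv_fun_div (Real.differentiable_sin x) differentiableAt_fun_id hx]
      simp
    have hdc : deriv (fun t => Real.cos t / t) x = (-Real.sin x * x - Real.cos x) / x^2 := by
      rw [deriv_fun_div (Real.differentiable_cos x) differentiableAt_fun_id hx]
      simp
    have h0 : FF 0 x = Real.sin x / x := rfl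
    have h0' : GG 0 x = Real.cos x / x := rfl
    have hF0 : FF 0 = fun t => Real.sin t / t := rfl
    have hG0 : GG 0 = fun t => Real.cos t / t := rfl
    rw [FF_succ, GG_succ, h0, h0', hF0, hG0]
    show x ^ 3 * _ = -1
    rw [hds, hdc]
    field_simp
    linear_combination (-x) * Real.sin_sq_add_cos_sq x
  | succ n ih =>
    intro x hx
    have hdF : deriv (FF (n+1)) x = (-(2*(n:ℝ)+3) * FF (n+1) x - FF n x) / x := by
      have := FF_ode n x hx
      field_simp
      linarith
    have hdG : deriv (GG (n+1)) x = (-(2*(n:ℝ)+3) * GG (n+1) x - GG n x) / x := by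
      have := GG_ode n x hx
      field_simp
      linarith
    have e : 2*(n+1)+3 = (2*n+3)+2 := by ring
    rw [FF_succ (n+1), GG_succ (n+1), hdF, hdG, e, pow_add]
    have := ih x hx
    field_simp
    linear_combination this

lemma FF_val (n : ℕ) (x : ℝ) : sphj n x = (-x)^n * FF n x := rfl
lemma GG_val (n : ℕ) (x : ℝ) : sphy n x = -((-x)^n * GG n x) := rfl

/-- For Im η ≠ 0 the Burton–Miller Dirichlet eigenvalue on the unit sphere,
λ_n(D) = i·k·h_n(k)·(j_n(k) − η·k·j_n′(k)), is nonzero at all wavenumbers. -/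
theorem dirichlet_BM_eigenvalue_ne_zero (n : ℕ) (k : ℝ) (hk : 0 < k) (η : ℂ)
    (hη : η.im ≠ 0) :
    Complex.I * (k : ℂ) * sphh n k *
      ((sphj n k : ℂ) - η * (k : ℂ) * (sphj' n k : ℂ)) ≠ 0 := by
  have hk' : k ≠ 0 := ne_of_gt hk
  have hkn : (-k)^n ≠ 0 := pow_ne_zero n (neg_ne_zero.mpr hk')
  have wr := wronskian n k hk'
  -- h_n(k) ≠ 0
  have hh : sphh n k ≠ 0 := by
    intro h0
    simp only [sphh, Complex.ext_iff, Complex.add_re, Complex.add_im, Complex.ofReal_re,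
      Complex.ofReal_im, Complex.mul_re, Complex.mul_im, Complex.I_re, Complex.I_im,
      Complex.zero_re, Complex.zero_im] at h0
    obtain ⟨h0re, h0im⟩ := h0
    have hj0 : sphj n k = 0 := by linarith
    have hy0 : sphy n k = 0 := by linarith
    have hF : FF n k = 0 := by
      have := FF_val n k; rw [hj0] at this
      rcases mul_eq_zero.mp this.symm with h | h
      · exact absurd h hkn
      · exact h
    have hG : GG n k = 0 := by
      have := GG_val n k; rw [hy0] at this
      have h2 : (-k)^n * GG n k = 0 := by linarith [neg_eq_zero.mp this.symm]
      rcases mul_eq_zero.mp h2 with h | h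
      · exact absurd h hkn
      · exact h
    rw [hF, hG] at wr
    norm_num at wr
  -- second factor ≠ 0
  have hfac : (sphj n k : ℂ) - η * (k : ℂ) * (sphj' n k : ℂ) ≠ 0 := by
    by_cases hj' : sphj' n k = 0
    · have hj : sphj n k ≠ 0 := by
        intro hj0
        have hF : FF n k = 0 := by
          have := FF_val n k; rw [hj0] at this
          rcases mul_eq_zero.mp this.symm with h | h
          · exact absurd h hkn
          · exact h
        have hdF : deriv (FF n) k = k * FF (n+1) k := by
          have := FF_succ n k; field_simp at this; linarith
        have hderiv : sphj' n k = (-k)^n * (k * FF (n+1) k) := by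
          have hd1 : DifferentiableAt ℝ (fun x : ℝ => (-x)^n) k := by fun_prop
          have hd2 : DifferentiableAt ℝ (FF n) k := diffAt (FF_smooth n) hk'
          have hjf : sphj n = fun x => (-x)^n * FF n x := rfl
          rw [sphj', hjf, deriv_fun_mul hd1 hd2, hF, hdF]
          ring
        have hF1 : FF (n+1) k = 0 := by
          rw [hj'] at hderiv
          rcases mul_eq_zero.mp hderiv.symm with h | h
          · exact absurd h hkn
          · rcases mul_eq_zero.mp h with h2 | h2
            · exact absurd h2 hk'
            · exact h2
        rw [hF, hF1] at wr
        norm_num at wr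
      rw [hj']
      simpa using hj
    · intro heq
      have h2 : ((sphj n k : ℂ) - η * (k : ℂ) * (sphj' n k : ℂ)).im = 0 := by
        rw [heq]; rfl
      simp only [Complex.sub_im, Complex.mul_im, Complex.mul_re, Complex.ofReal_re,
        Complex.ofReal_im] at h2
      have h3 : η.im * (k * sphj' n k) = 0 := by ring_nf at h2 ⊢; linarith
      exact mul_ne_zero hη (mul_ne_zero hk' hj') h3
  exact mul_ne_zero (mul_ne_zero (mul_ne_zero Complex.I_ne_zero
    (Complex.ofReal_ne_zero.mpr hk')) hh) hfac
end
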